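/- There exist infinitely many quintuples (x_1, …, x_5) ∈ ℚ⁵ satisfying x_{i+2}² − 2x_{i+1}² + x_i² = 2 for i = 1, 2, 3, which are non-trivial, i.e., for which there is no t ∈ ℚ with x_i² = (t+i)² for all i ∈ {1,…,5}. In other words, the set of non-trivial rational solutions of the Büchi problem of length 5 is infinite. -/
import Mathlib

/-- Common denominator of the Büchi quintuple family. -/
def bD (s : ℚ) : ℚ := 3*s^4 + 5*s^2 - 4

/-- A one-parameter family of non-trivial Büchi quintuples. -/
def bx (s : ℚ) : Fin 5 → ℚ
  | 0 => (s^5 - 2*s^4 + 11*s^3 + 2*s^2 + 4*s - 8) / bD s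
  | 1 => (s^5 - s^4 - s^3 - 11*s^2 + 4*s - 4) / bD s
  | 2 => (-s^5 + 5*s^3 + 12*s) / bD s
  | 3 => (s^5 + s^4 - s^3 + 11*s^2 + 4*s + 4) / bD s
  | 4 => (s^5 + 2*s^4 + 11*s^3 - 2*s^2 + 4*s + 8) / bD s

lemma bD_pos {s : ℚ} (hs : (9:ℚ) ≤ s) : 0 < bD s := by
  have h1 : (0:ℚ) < s := by linarith
  have h2 : (81:ℚ) ≤ s^2 := by nlinarith
  unfold bD
  nlinarith [sq_nonneg s, sq_nonneg (s^2)]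

lemma bx_middle_bounds {s : ℚ} (hs : (9:ℚ) ≤ s) :
    -(s/3) < bx s 2 ∧ bx s 2 < -(s/3) + 1 := by
  have hD := bD_pos hs
  have h1 : (0:ℚ) < s := by linarith
  have h2 : (81:ℚ) ≤ s^2 := by nlinarith
  have h3 : (729:ℚ) ≤ s^3 := by
    nlinarith [mul_nonneg (sub_nonneg.2 hs) (sq_nonneg s)]
  have h4 : 9*s^3 ≤ s^4 := by
    nlinarith [mul_nonneg (sub_nonneg.2 hs) (sq_nonneg s), mul_nonneg (mul_nonneg (sub_nonneg.2 hs) h1.le) h1.le]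
  constructor
  · show -(s/3) < (-s^5 + 5*s^3 + 12*s) / bD s
    rw [lt_div_iff₀ hD]
    unfold bD
    nlinarith [pow_pos h1 3]
  · show (-s^5 + 5*s^3 + 12*s) / bD s < -(s/3) + 1
    rw [div_lt_iff₀ hD]
    unfold bD
    nlinarith [pow_pos h1 3]

set_option maxHeartbeats 2000000 in
lemma bx_mem {s : ℚ} (hs : (9:ℚ) ≤ s) :
    (bx s) ∈ {x : Fin 5 → ℚ |
      (x 2 ^ 2 - 2 * x 1 ^ 2 + x 0 ^ 2 = 2 ∧
       x 3 ^ 2 - 2 * x 2 ^ 2 + x 1 ^ 2 = 2 ∧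
       x 4 ^ 2 - 2 * x 3 ^ 2 + x 2 ^ 2 = 2) ∧
      ¬ ∃ t : ℚ, ∀ i : Fin 5, x i ^ 2 = (t + ((i : ℕ) + 1 : ℚ)) ^ 2} := by
  have hD := bD_pos hs
  have hDne : bD s ≠ 0 := ne_of_gt hD
  constructor
  · refine ⟨?_, ?_, ?_⟩
    · show ((-s^5 + 5*s^3 + 12*s) / bD s)^2 - 2*((s^5 - s^4 - s^3 - 11*s^2 + 4*s - 4) / bD s)^2
        + ((s^5 - 2*s^4 + 11*s^3 + 2*s^2 + 4*s - 8) / bD s)^2 = 2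
      field_simp
      unfold bD
      ring
    · show ((s^5 + s^4 - s^3 + 11*s^2 + 4*s + 4) / bD s)^2 - 2*((-s^5 + 5*s^3 + 12*s) / bD s)^2
        + ((s^5 - s^4 - s^3 - 11*s^2 + 4*s - 4) / bD s)^2 = 2
      field_simp
      unfold bD
      ring
    · show ((s^5 + 2*s^4 + 11*s^3 - 2*s^2 + 4*s + 8) / bD s)^2
        - 2*((s^5 + s^4 - s^3 + 11*s^2 + 4*s + 4) / bD s)^2
        + ((-s^5 + 5*s^3 + 12*s) / bD s)^2 = 2
      field_simp
      unfold bD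
      ring
  · rintro ⟨t, ht⟩
    have h0 := ht 0
    have h1 := ht 1
    have e0 : (s^5 - 2*s^4 + 11*s^3 + 2*s^2 + 4*s - 8)^2 = (t+1)^2 * (bD s)^2 := by
      have hx : bx s 0 ^ 2 = (t + 1)^2 := by
        have : (((0 : Fin 5) : ℕ) + 1 : ℚ) = 1 := by norm_num
        rw [this] at h0; exact h0
      have hx2 : ((s^5 - 2*s^4 + 11*s^3 + 2*s^2 + 4*s - 8) / bD s)^2 = (t+1)^2 := hx
      have := congrArg (· * (bD s)^2) hx2
      simpa [div_pow, div_mul_cancel₀, pow_ne_zero 2 hDne] using this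
    have e1 : (s^5 - s^4 - s^3 - 11*s^2 + 4*s - 4)^2 = (t+2)^2 * (bD s)^2 := by
      have hx : bx s 1 ^ 2 = (t + 2)^2 := by
        have : (((1 : Fin 5) : ℕ) + 1 : ℚ) = 2 := by norm_num
        rw [this] at h1; exact h1
      have hx2 : ((s^5 - s^4 - s^3 - 11*s^2 + 4*s - 4) / bD s)^2 = (t+2)^2 := hx
      have := congrArg (· * (bD s)^2) hx2
      simpa [div_pow, div_mul_cancel₀, pow_ne_zero 2 hDne] using this
    have ht2 : (s^5 - s^4 - s^3 - 11*s^2 + 4*s - 4)^2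
        - (s^5 - 2*s^4 + 11*s^3 + 2*s^2 + 4*s - 8)^2 - (bD s)^2 = (2*t+2) * (bD s)^2 := by
      linear_combination e1 - e0
    have hz : ((2*t+2) * (bD s)^2)^2
        = 4 * (s^5 - 2*s^4 + 11*s^3 + 2*s^2 + 4*s - 8)^2 * (bD s)^2 := by
      linear_combination (-4 * (bD s)^2) * e0
    have hfin : ((s^5 - s^4 - s^3 - 11*s^2 + 4*s - 4)^2
        - (s^5 - 2*s^4 + 11*s^3 + 2*s^2 + 4*s - 8)^2 - (bD s)^2)^2
        - 4 * (s^5 - 2*s^4 + 11*s^3 + 2*s^2 + 4*s - 8)^2 * (bD s)^2 = 0 := by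
      rw [ht2, hz]; ring
    have hfac : ((s^5 - s^4 - s^3 - 11*s^2 + 4*s - 4)^2
        - (s^5 - 2*s^4 + 11*s^3 + 2*s^2 + 4*s - 8)^2 - (bD s)^2)^2
        - 4 * (s^5 - 2*s^4 + 11*s^3 + 2*s^2 + 4*s - 8)^2 * (bD s)^2
        = -(32 * s^2 * (s^2-1) * (s^2-4) * (s^2+1) * (s^2+4)
            * (s^2-3*s-2) * (s^2+3*s-2) * (s^2-s+2) * (s^2+s+2)) := by
      unfold bD; ring
    have h1s : (0:ℚ) < s := by linarith
    have hprod : (0:ℚ) < 32 * s^2 * (s^2-1) * (s^2-4) * (s^2+1) * (s^2+4)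
        * (s^2-3*s-2) * (s^2+3*s-2) * (s^2-s+2) * (s^2+s+2) := by
      have hsq : (81:ℚ) ≤ s^2 := by nlinarith
      have f1 : (0:ℚ) < s^2 := by positivity
      have f2 : (0:ℚ) < s^2 - 1 := by linarith
      have f3 : (0:ℚ) < s^2 - 4 := by linarith
      have f4 : (0:ℚ) < s^2 + 1 := by linarith
      have f5 : (0:ℚ) < s^2 + 4 := by linarith
      have f6 : (0:ℚ) < s^2 - 3*s - 2 := by nlinarith
      have f7 : (0:ℚ) < s^2 + 3*s - 2 := by nlinarith
      have f8 : (0:ℚ) < s^2 - s + 2 := by nlinarith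
      have f9 : (0:ℚ) < s^2 + s + 2 := by nlinarith
      positivity
    rw [hfac] at hfin
    linarith

theorem buchi_length_five_nontrivial_infinite :
    {x : Fin 5 → ℚ |
      (x 2 ^ 2 - 2 * x 1 ^ 2 + x 0 ^ 2 = 2 ∧
       x 3 ^ 2 - 2 * x 2 ^ 2 + x 1 ^ 2 = 2 ∧
       x 4 ^ 2 - 2 * x 3 ^ 2 + x 2 ^ 2 = 2) ∧
      ¬ ∃ t : ℚ, ∀ i : Fin 5, x i ^ 2 = (t + ((i : ℕ) + 1 : ℚ)) ^ 2}.Infinite := by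
  apply Set.infinite_of_injective_forall_mem
    (f := fun n : ℕ => bx (3*(n:ℚ)+9))
  · -- injectivity
    have key : ∀ n₁ n₂ : ℕ, n₁ < n₂ → bx (3*(n₂:ℚ)+9) 2 < bx (3*(n₁:ℚ)+9) 2 := by
      intro n₁ n₂ hlt
      have hc : (n₁:ℚ) + 1 ≤ (n₂:ℚ) := by exact_mod_cast hlt
      have hs₁ : (9:ℚ) ≤ 3*(n₁:ℚ)+9 := by
        have : (0:ℚ) ≤ (n₁:ℚ) := Nat.cast_nonneg n₁
        linarith
      have hs₂ : (9:ℚ) ≤ 3*(n₂:ℚ)+9 := by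
        have : (0:ℚ) ≤ (n₂:ℚ) := Nat.cast_nonneg n₂
        linarith
      have b₁ := (bx_middle_bounds hs₁).1
      have b₂ := (bx_middle_bounds hs₂).2
      have : bx (3*(n₂:ℚ)+9) 2 < -((3*(n₂:ℚ)+9)/3) + 1 := b₂
      have h2 : -((3*(n₂:ℚ)+9)/3) + 1 ≤ -((3*(n₁:ℚ)+9)/3) := by linarith
      linarith [b₁]
    intro n₁ n₂ h
    have heq : bx (3*(n₁:ℚ)+9) 2 = bx (3*(n₂:ℚ)+9) 2 := congrFun h 2
    rcases lt_trichotomy n₁ n₂ with hlt | heqn | hlt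
    · exfalso; have := key n₁ n₂ hlt; linarith
    · exact heqn
    · exfalso; have := key n₂ n₁ hlt; linarith
  · intro n
    have hs : (9:ℚ) ≤ 3*(n:ℚ)+9 := by
      have : (0:ℚ) ≤ (n:ℚ) := Nat.cast_nonneg n
      linarith
    exact bx_mem hs
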